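/- Let n ≥ 1, μ ∈ {1,…,n}, s = ⌊n/μ⌋, and suppose n − μs is even. Let ω ∈ ℝ and set σ_0 = ω, σ_μ = σ_{−μ} = 1, σ_k = 0 for every other integer k with −(n−1) ≤ k ≤ n. If there exist pairwise distinct complex numbers z_1,…,z_n with |z_j| = 1 and nonzero real numbers X_1,…,X_n such that ∑_{j=1}^n X_j z_j^l = σ_l for every integer l with −(n−1) ≤ l ≤ n, then U_s(ω/2) = 1 or U_s(ω/2) = −1, where U_s is the Chebyshev polynomial of the second kind. -/

import Mathlib

/-!
Conjugating the moment equations (|z_j| = 1, real weights, real moments) shows that the nodes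
z_j⁻¹ carry the same 2n consecutive moments as the z_j; a Vandermonde argument on the union of the
two node sets then gives {z_j⁻¹} = {z_j}. Hence P = ∏ (X - z_j) = ∑ a_k X^k is self-reciprocal,
a_{n-k} = γ a_k. Expanding ∑_j X_j z_j^{-m} P(z_j) = 0 with the moments gives the recurrence
a_{m+μ} + a_{m-μ} = -ω a_m, so along each residue class mod μ the coefficients are Chebyshev
values: a_{r+tμ} = a_r U_t(-ω/2). With n = ρ + sμ this yields a_{sμ} = a_0 U_s and
1 = a_n = a_ρ U_s, and self-reciprocity (a_0 = γ, a_{sμ} = γ a_ρ) turns them into U_s(-ω/2)^2 = 1.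
-/

open Polynomial Finset ComplexConjugate

theorem Finset.sum_fiber_eq_zero_of_forall_sum_mul_pow_eq_zero {K ι : Type*} [Field K]
    [Fintype ι] [DecidableEq K] (f c : ι → K) {N : ℕ} (hN : Fintype.card ι ≤ N)
    (h : ∀ l < N, ∑ i, c i * f i ^ l = 0) (u : K) :
    ∑ i with f i = u, c i = 0 := by
  by_cases hu : u ∈ univ.image f
  swap
  · refine sum_eq_zero fun i hi => absurd (mem_image_of_mem f (mem_univ i)) ?_
    rwa [(mem_filter.mp hi).2]
  set p : K[X] := ∏ v ∈ (univ.image f).erase u, (X - C v)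
  have hp_deg : p.natDegree < N := by
    calc p.natDegree = ((univ.image f).erase u).card := natDegree_finsetProd_X_sub_C_eq_card _ _
      _ < (univ.image f).card := card_erase_lt_of_mem hu
      _ ≤ N := card_image_le.trans hN
  have hp_u : p.eval u ≠ 0 := by
    simp only [p, eval_prod, eval_sub, eval_X, eval_C, prod_ne_zero_iff, mem_erase]
    exact fun v hv => sub_ne_zero.mpr (Ne.symm hv.1)
  have hsum : ∑ i, c i * p.eval (f i) = 0 := by
    simp_rw [eval_eq_sum_range' hp_deg, mul_sum]
    rw [sum_comm]
    refine sum_eq_zero fun l hl => ?_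
    simp_rw [mul_left_comm (c _), ← mul_sum, h l (mem_range.mp hl), mul_zero]
  have hfiber : ∑ i, c i * p.eval (f i) = (∑ i with f i = u, c i) * p.eval u := by
    rw [sum_mul, sum_filter]
    refine sum_congr rfl fun i _ => ?_
    split_ifs with hi
    · rw [hi]
    · rw [eval_prod, prod_eq_zero (mem_erase.mpr ⟨hi, mem_image_of_mem f (mem_univ i)⟩)
        (by simp), mul_zero]
  exact (mul_eq_zero.mp (hfiber ▸ hsum)).resolve_right hp_u

theorem exists_eq_of_forall_sum_mul_zpow_eq {K ι : Type*} [Field K] [Fintype ι] {z w : ι → K}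
    (hz : Function.Injective z) (hz0 : ∀ i, z i ≠ 0) (hw0 : ∀ i, w i ≠ 0) {c : ι → K}
    (hc : ∀ i, c i ≠ 0) (κ : ℤ)
    (h : ∀ l < 2 * Fintype.card ι, ∑ i, c i * z i ^ (κ + l) = ∑ i, c i * w i ^ (κ + l))
    (k : ι) : ∃ j, w j = z k := by
  classical
  by_contra! hk
  -- the signed weights on the nodes of `z` and `w` have vanishing moments, yet their fibre
  -- over `z k` is the single nonzero weight `c k * z k ^ κ`
  have hfiber := sum_fiber_eq_zero_of_forall_sum_mul_pow_eq_zero (Sum.elim z w)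
    (Sum.elim (fun i => c i * z i ^ κ) fun i => -(c i * w i ^ κ))
    (N := 2 * Fintype.card ι) (by simp [two_mul]) (fun l hl => ?_) (z k)
  · simp [sum_filter, hz.eq_iff, hk, hc k] at hfiber
    exact zpow_ne_zero κ (hz0 k) hfiber
  · simp only [Fintype.sum_sum_type, Sum.elim_inl, Sum.elim_inr, neg_mul, sum_neg_distrib]
    simp_rw [mul_assoc, ← zpow_natCast, ← zpow_add₀ (hz0 _), ← zpow_add₀ (hw0 _)]
    rw [h l hl, add_neg_cancel]

theorem exists_inv_eq_of_conj_sum_mul_zpow_eq {ι : Type*} [Fintype ι] {z : ι → ℂ}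
    (hz : Function.Injective z) (habs : ∀ i, ‖z i‖ = 1) {c : ι → ℝ} (hc : ∀ i, c i ≠ 0)
    (κ : ℤ) (hreal : ∀ l < 2 * Fintype.card ι,
      conj (∑ i, (c i : ℂ) * z i ^ (κ + l)) = ∑ i, (c i : ℂ) * z i ^ (κ + l))
    (k : ι) : ∃ j, (z j)⁻¹ = z k := by
  have hz0 (i : ι) : z i ≠ 0 := norm_ne_zero_iff.mp (by rw [habs i]; exact one_ne_zero)
  refine exists_eq_of_forall_sum_mul_zpow_eq hz hz0 (fun i => inv_ne_zero (hz0 i))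
    (fun i => Complex.ofReal_ne_zero.mpr (hc i)) κ (fun l hl => ?_) k
  rw [← hreal l hl, map_sum]
  simp [Complex.inv_eq_conj (habs _)]

theorem Fintype.prod_comp_eq_of_forall_exists {ι α M : Type*} [Fintype ι] [CommMonoid M]
    {z w : ι → α} (hz : Function.Injective z) (h : ∀ k, ∃ j, w j = z k) (g : α → M) :
    ∏ j, g (w j) = ∏ j, g (z j) := by
  choose σ hσ using h
  have hσ_inj : Function.Injective σ := fun a b hab => hz (by rw [← hσ a, ← hσ b, hab])
  exact (Fintype.prod_bijective σ hσ_inj.bijective_of_finite _ _ fun k => by rw [hσ]).symm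

namespace Polynomial

theorem reverse_prod_X_sub_C {K ι : Type*} [Field K] (s : Finset ι) {z : ι → K}
    (hz : ∀ i ∈ s, z i ≠ 0) :
    (∏ i ∈ s, (X - C (z i))).reverse = C (∏ i ∈ s, -z i) * ∏ i ∈ s, (X - C (z i)⁻¹) := by
  classical
  have hone : (1 : K[X]).reverse = 1 := by simpa using reverse_C (1 : K)
  induction s using Finset.induction_on with
  | empty => simpa using hone
  | insert a s ha ih =>
    have hrev : (X - C (z a)).reverse = C (-z a) * (X - C (z a)⁻¹) := by
      rw [sub_eq_add_neg, ← C_neg, reverse_add_C, mul_sub, ← C_mul,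
        neg_mul, mul_inv_cancel₀ (hz a (mem_insert_self a s))]
      simpa [sub_eq_add_neg, add_comm, hone] using reverse_mul_X (1 : K[X])
    rw [prod_insert ha, prod_insert ha, prod_insert ha, reverse_mul_of_domain, hrev,
      ih fun i hi => hz i (mem_insert_of_mem hi), C_mul]
    ring

theorem coeff_natDegree_sub_of_reverse_eq {R : Type*} [Semiring R] {P : R[X]} {γ : R}
    (hP : P.reverse = C γ * P) {k : ℕ} (hk : k ≤ P.natDegree) :
    P.coeff (P.natDegree - k) = γ * P.coeff k := by
  rw [← coeff_C_mul, ← hP, coeff_reverse, revAt_le hk]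

theorem sum_coeff_mul_sum_mul_zpow_eq_zero {K ι : Type*} [Field K] [Fintype ι] {P : K[X]}
    {N : ℕ} (hN : P.natDegree < N) {z : ι → K} (hz0 : ∀ i, z i ≠ 0)
    (hroot : ∀ i, P.eval (z i) = 0) (c : ι → K) (m : ℤ) :
    ∑ k ∈ range N, P.coeff k * ∑ i, c i * z i ^ ((k : ℤ) - m) = 0 := by
  calc ∑ k ∈ range N, P.coeff k * ∑ i, c i * z i ^ ((k : ℤ) - m)
      = ∑ i, c i * z i ^ (-m) * P.eval (z i) := by
        simp_rw [eval_eq_sum_range' hN, mul_sum]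
        rw [sum_comm]
        refine sum_congr rfl fun i _ => sum_congr rfl fun k _ => ?_
        rw [sub_eq_neg_add, zpow_add₀ (hz0 i), zpow_natCast]
        ring
    _ = 0 := sum_eq_zero fun i _ => by rw [hroot, mul_zero]

end Polynomial

def fullMoment {R : Type*} [Zero R] [One R] (ω : R) (μ : ℕ) (l : ℤ) : R :=
  if l = 0 then ω else if l = (μ : ℤ) ∨ l = -(μ : ℤ) then 1 else 0

theorem fullMoment_natCast_sub {R : Type*} [AddMonoidWithOne R] (ω : R) {μ : ℕ} (hμ : 0 < μ)
    (k m : ℕ) :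
    fullMoment ω μ ((k : ℤ) - m) = (if k = m then ω else 0) + (if k = m + μ then 1 else 0) +
      if μ ≤ m then (if k = m - μ then 1 else 0) else 0 := by
  unfold fullMoment
  split_ifs <;> first | omega | simp

theorem sum_coeff_mul_fullMoment {R : Type*} [CommSemiring R] (ω : R) {μ n m : ℕ} (hμ : 0 < μ)
    {P : R[X]} (hP : P.natDegree ≤ n) (hm : m ≤ n) :
    ∑ k ∈ range (n + 1), P.coeff k * fullMoment ω μ ((k : ℤ) - m) =
      ω * P.coeff m + P.coeff (m + μ) + if μ ≤ m then P.coeff (m - μ) else 0 := by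
  simp_rw [fullMoment_natCast_sub ω hμ, mul_add, sum_add_distrib, mul_ite, mul_one, mul_zero,
    sum_ite_eq', mem_range]
  have htop : (if m + μ < n + 1 then P.coeff (m + μ) else 0) = P.coeff (m + μ) := by
    split_ifs with h
    · rfl
    · exact (coeff_eq_zero_of_natDegree_lt (by omega)).symm
  rw [if_pos (Nat.lt_succ_of_le hm), htop, mul_comm]
  split_ifs with hμm
  · rw [sum_ite_eq', if_pos (mem_range.mpr (by omega))]
  · rw [sum_const_zero]

theorem coeff_recurrence_of_moments {K ι : Type*} [Field K] [Fintype ι] (ω : K) {μ n : ℕ}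
    (hμ : 0 < μ) {z : ι → K} (hz0 : ∀ i, z i ≠ 0) {c : ι → K} {P : K[X]}
    (hP : P.natDegree ≤ n) (hroot : ∀ i, P.eval (z i) = 0)
    (hmom : ∀ l : ℤ, -((n : ℤ) - 1) ≤ l → l ≤ n → ∑ i, c i * z i ^ l = fullMoment ω μ l)
    {m : ℕ} (hm : m < n) :
    ω * P.coeff m + P.coeff (m + μ) + (if μ ≤ m then P.coeff (m - μ) else 0) = 0 := by
  have h := sum_coeff_mul_sum_mul_zpow_eq_zero (Nat.lt_succ_of_le hP) hz0 hroot c m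
  rw [sum_congr rfl fun k hk => by rw [hmom _ (by omega) (by simp at hk; omega)],
    sum_coeff_mul_fullMoment ω hμ hP hm.le] at h
  exact h

namespace Polynomial.Chebyshev

theorem eq_mul_eval_U_of_recurrence {R : Type*} [CommRing R] (x : R) (b : ℕ → R) {s : ℕ}
    (h1 : b 1 = 2 * x * b 0) (h2 : ∀ t, t + 2 ≤ s → b (t + 2) = 2 * x * b (t + 1) - b t) :
    ∀ t ≤ s, b t = b 0 * (U R t).eval x := by
  intro t
  induction t using Nat.twoStepInduction with
  | zero => simp
  | one => simp [h1, mul_comm]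
  | more t ih0 ih1 =>
    intro ht
    rw [h2 t ht, ih0 (by omega), ih1 (by omega)]
    push_cast
    rw [U_add_two]
    simp only [eval_sub, eval_mul, eval_X, eval_ofNat]
    ring

theorem coeff_add_mul_eq_mul_eval_U {R : Type*} [CommRing R] (x : R) (a : ℕ → R)
    {μ n : ℕ} (hμ : 0 < μ)
    (hrec : ∀ m < n, a (m + μ) + (if μ ≤ m then a (m - μ) else 0) = 2 * x * a m)
    {r s : ℕ} (hr : r < μ) (hrs : r + s * μ ≤ n) :
    a (r + s * μ) = a r * (U R s).eval x := by
  rcases Nat.eq_zero_or_pos s with rfl | hs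
  · simp
  have key := eq_mul_eval_U_of_recurrence x (fun t => a (r + t * μ)) (s := s) ?_ ?_ s le_rfl
  · simpa using key
  · have hμs : μ ≤ s * μ := Nat.le_mul_of_pos_left μ hs
    simpa [if_neg (show ¬μ ≤ r by omega)] using hrec r (by omega)
  · intro t ht
    have hle : (t + 2) * μ ≤ s * μ := Nat.mul_le_mul_right μ ht
    have h := hrec (r + (t + 1) * μ) (by nlinarith)
    rw [if_pos (by nlinarith), show r + (t + 1) * μ + μ = r + (t + 2) * μ by ring,
      show r + (t + 1) * μ - μ = r + t * μ by rw [add_mul, one_mul]; omega] at h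
    linear_combination h

theorem sq_eval_U_div_eq_one {K : Type*} [Field K] (x γ : K) (a : ℕ → K) {μ n : ℕ}
    (hμ : 0 < μ) (hn : a n = 1) (hsym : ∀ k ≤ n, a (n - k) = γ * a k)
    (hrec : ∀ m < n, a (m + μ) + (if μ ≤ m then a (m - μ) else 0) = 2 * x * a m) :
    ((U K (n / μ : ℕ)).eval x) ^ 2 = 1 := by
  set s := n / μ
  set ρ := n % μ
  have hρs : ρ + s * μ = n := Nat.mod_add_div' n μ
  have hρμ : ρ < μ := Nat.mod_lt n hμ
  have hc0 := coeff_add_mul_eq_mul_eval_U x a hμ hrec hμ (s := s) (by omega)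
  have hcρ := coeff_add_mul_eq_mul_eval_U x a hμ hrec hρμ hρs.le
  have ha0 : a 0 = γ := by simpa [hn] using hsym n le_rfl
  have haρ : a (s * μ) = γ * a ρ := by rw [← hsym ρ (by omega)]; congr 1; omega
  have hγ : γ ≠ 0 := by
    rintro rfl
    simpa [hn] using hsym 0 (Nat.zero_le n)
  have hc : (U K s).eval x = a ρ := mul_left_cancel₀ hγ (by rw [← haρ, ← ha0, ← hc0, zero_add])
  rw [sq]
  nth_rewrite 1 [hc]
  rw [← hcρ, hρs, hn]

theorem eval_U_eq_one_or_neg_one_of_sq_eq_one (ω : ℝ) (s : ℕ)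
    (h : ((U ℂ s).eval (-(ω : ℂ) / 2)) ^ 2 = 1) :
    (U ℝ s).eval (ω / 2) = 1 ∨ (U ℝ s).eval (ω / 2) = -1 := by
  have hcast : (U ℂ s).eval (-(ω : ℂ) / 2) = (((U ℝ s).eval (-(ω / 2)) : ℝ) : ℂ) := by
    have hx : -(ω : ℂ) / 2 = Complex.ofRealHom (-(ω / 2)) := by simp [neg_div]
    rw [hx, ← map_U Complex.ofRealHom, eval_map, eval₂_at_apply]
    rfl
  rw [hcast, U_eval_neg] at h
  have hsq : ((U ℝ s).eval (ω / 2)) ^ 2 = 1 := by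
    have h' : (((s : ℤ).negOnePow : ℝ) * (U ℝ s).eval (ω / 2)) ^ 2 = 1 := by exact_mod_cast h
    rwa [mul_pow, ← Int.cast_pow, ← Units.val_pow_eq_pow_val, Int.units_sq, Units.val_one,
      Int.cast_one, one_mul] at h'
  exact mul_self_eq_one_iff.mp (by rw [← sq, hsq])

end Polynomial.Chebyshev

theorem stmt8_general (n μ : ℕ) (hμ : μ ∈ Finset.Icc 1 n) (ω : ℝ)
    (s : ℕ) (hs : s = n / μ)
    (z : Fin n → ℂ) (X : Fin n → ℝ)
    (hz : Function.Injective z) (habs : ∀ j, ‖z j‖ = 1)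
    (hX : ∀ j, X j ≠ 0)
    (hmom : ∀ l : ℤ, -((n : ℤ) - 1) ≤ l → l ≤ n →
      ∑ j : Fin n, (X j : ℂ) * z j ^ l =
        if l = 0 then (ω : ℂ) else if l = (μ : ℤ) ∨ l = -(μ : ℤ) then 1 else 0) :
    Polynomial.eval (ω / 2) (Polynomial.Chebyshev.U ℝ s) = 1 ∨
      Polynomial.eval (ω / 2) (Polynomial.Chebyshev.U ℝ s) = -1 := by
  have hμ0 : 0 < μ := (Finset.mem_Icc.mp hμ).1
  have hz0 (j : Fin n) : z j ≠ 0 := norm_ne_zero_iff.mp (by rw [habs j]; exact one_ne_zero)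
  have hinv : ∀ k, ∃ j, (z j)⁻¹ = z k :=
    exists_inv_eq_of_conj_sum_mul_zpow_eq hz habs hX (-((n : ℤ) - 1)) fun l hl => by
      rw [Fintype.card_fin] at hl
      rw [hmom _ (by omega) (by omega)]
      split_ifs <;> simp
  set P : ℂ[X] := ∏ j, (Polynomial.X - C (z j)) with hP
  have hPdeg : P.natDegree = n := by simp [P]
  have hroot (j : Fin n) : P.eval (z j) = 0 := by
    rw [hP, eval_prod]
    exact prod_eq_zero (mem_univ j) (by simp)
  have hrev : P.reverse = C (∏ j, -z j) * P := by
    rw [hP, reverse_prod_X_sub_C _ fun j _ => hz0 j,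
      Fintype.prod_comp_eq_of_forall_exists hz hinv fun u => Polynomial.X - C u]
  have htop : P.coeff n = 1 := hPdeg ▸ (monic_prod_X_sub_C _ _).coeff_natDegree
  have hsym (k : ℕ) (hk : k ≤ n) : P.coeff (n - k) = (∏ j, -z j) * P.coeff k := by
    simpa [hPdeg] using coeff_natDegree_sub_of_reverse_eq hrev (k := k) (by omega)
  have hU := Chebyshev.sq_eval_U_div_eq_one (-(ω : ℂ) / 2) _ P.coeff hμ0 htop hsym
    fun m hm => by
      linear_combination coeff_recurrence_of_moments (ω : ℂ) hμ0 hz0 hPdeg.le hroot hmom hm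
  subst hs
  exact Chebyshev.eval_U_eq_one_or_neg_one_of_sq_eq_one ω _ hU

/-- necessary condition U_s(ω/2) = ±1 for (ℬ)-regular solvability of the full
moment system when n - μ⌊n/μ⌋ is even. -/
theorem stmt8 (n μ : ℕ) (hn : 1 ≤ n) (hμ : μ ∈ Finset.Icc 1 n) (ω : ℝ)
    (s : ℕ) (hs : s = n / μ) (heven : Even (n - μ * s))
    (z : Fin n → ℂ) (X : Fin n → ℝ)
    (hz : Function.Injective z) (habs : ∀ j, ‖z j‖ = 1)
    (hX : ∀ j, X j ≠ 0)
    (hmom : ∀ l : ℤ, -((n : ℤ) - 1) ≤ l → l ≤ n →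
      ∑ j : Fin n, (X j : ℂ) * z j ^ l =
        if l = 0 then (ω : ℂ) else if l = (μ : ℤ) ∨ l = -(μ : ℤ) then 1 else 0) :
    Polynomial.eval (ω / 2) (Polynomial.Chebyshev.U ℝ s) = 1 ∨
      Polynomial.eval (ω / 2) (Polynomial.Chebyshev.U ℝ s) = -1 :=
  stmt8_general n μ hμ ω s hs z X hz habs hX hmom
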